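/- arXiv:1905.08098 — 3 statements merged into one kernel-verified Lean document; each statement's English description precedes it below -/
import Mathlib

section
/- Let p ≥ q ≥ 1 be integers, π ∈ S_{p+q}, r a nonnegative integer, and f ∈ S_{p+q}. Let C^π = πG_{p,q}π⁻¹. Then d(f,g) > r for every g ∈ C^π if and only if at least one of the following holds: H = ⋃_{i∈H} A^{C^π}_{i→f(i)}, or R = ⋃_{i∈R} A^{C^π}_{i→f(i)}. -/
open Equiv

/-- The ℓ∞-distance between two permutations of `Fin n`. -/
noncomputable def linfDist {n : ℕ} (f g : Perm (Fin n)) : ℕ :=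
  Finset.univ.sup fun i : Fin n => (((f i).val : ℤ) - ((g i).val : ℤ)).natAbs

/-- The distance from a permutation to a code `C`. -/
noncomputable def distToCode {n : ℕ} (f : Perm (Fin n)) (C : Set (Perm (Fin n))) : ℕ :=
  sInf (linfDist f '' C)

/-- The covering radius of a code `C ⊆ Sₙ`. -/
noncomputable def coveringRadius {n : ℕ} (C : Set (Perm (Fin n))) : ℕ :=
  sSup (Set.range fun f : Perm (Fin n) => distToCode f C)

/-- The relabeling `C^π = π C π⁻¹`. -/
def conjCode {n : ℕ} (π : Perm (Fin n)) (C : Set (Perm (Fin n))) : Set (Perm (Fin n)) :=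
  (fun g => π * g * π⁻¹) '' C

/-- Maximum covering radius over all relabelings. -/
noncomputable def Lmax {n : ℕ} (C : Set (Perm (Fin n))) : ℕ :=
  sSup (Set.range fun π : Perm (Fin n) => coveringRadius (conjCode π C))

/-- Minimum covering radius over all relabelings. -/
noncomputable def Lmin {n : ℕ} (C : Set (Perm (Fin n))) : ℕ :=
  sInf (Set.range fun π : Perm (Fin n) => coveringRadius (conjCode π C))

/-- The `(p,q)`-type group `G_{p,q} = ⟨(1,…,p), (p+1,…,p+q)⟩ ⊆ S_{p+q}`
(using `0`-indexed `Fin (p+q)`). -/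
def Gpq (p q : ℕ) : Subgroup (Perm (Fin (p + q))) :=
  Subgroup.closure
    { ((List.finRange p).map (Fin.castLE (Nat.le_add_right p q))).formPerm,
      ((List.finRange q).map (Fin.natAdd p)).formPerm }

/-- The transitive cyclic group `Gₙ = ⟨(1,2,…,n)⟩`. -/
def Gcyc (n : ℕ) : Subgroup (Perm (Fin n)) := Subgroup.closure {finRotate n}

/-- The natural dihedral group
`Dₙ = ⟨(1,2,…,n), ∏_{i=1}^{⌊n/2⌋} (i, n-i)⟩` (using `0`-indexed `Fin n`). -/
def Dn (n : ℕ) : Subgroup (Perm (Fin n)) :=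
  Subgroup.closure
    { finRotate n,
      (((List.finRange (n / 2)).map fun i =>
        Equiv.swap (⟨i.val, by have := i.isLt; omega⟩ : Fin n)
          (⟨n - 2 - i.val, by have := i.isLt; omega⟩ : Fin n)).prod) }

open Classical in
/-- For the relabeled code `C^π = π G_{p,q} π⁻¹`, the set `A^{C^π}_{i→j}`:
the set of `g⁻¹(π(1))` (resp. `g⁻¹(π(p+1))`) over all `g ∈ C^π` with `|g(i) - j| > r`,
according to whether `i ∈ H = {π(1),…,π(p)}` or `i ∈ R = {π(p+1),…,π(p+q)}`. -/
noncomputable def AsetRel (p q : ℕ) (hq : 0 < q) (π : Perm (Fin (p + q))) (r : ℕ)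
    (i j : Fin (p + q)) : Set (Fin (p + q)) :=
  if i ∈ π '' {x : Fin (p + q) | (x : ℕ) < p} then
    {x | ∃ g ∈ conjCode π (Gpq p q : Set (Perm (Fin (p + q)))),
      r < (((g i).val : ℤ) - ((j : ℕ) : ℤ)).natAbs ∧
      x = g⁻¹ (π ⟨0, i.pos⟩)}
  else
    {x | ∃ g ∈ conjCode π (Gpq p q : Set (Perm (Fin (p + q)))),
      r < (((g i).val : ℤ) - ((j : ℕ) : ℤ)).natAbs ∧
      x = g⁻¹ (π ⟨p, Nat.lt_add_of_pos_right hq⟩)}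

/-!
`G_{p,q}` consists exactly of the block rotations `x ↦ a + x` on the first block `ℤ/p` and
`y ↦ b + y` on the second block `ℤ/q`. Hence `f` is at distance `> r` from every element of `C^π`
iff for every pair `(a, b)` the rotation by `a` moves some point of `H` far from `f`, or the
rotation by `b` moves some point of `R` far from `f`. The first alternative depends only on `a`
and the second only on `b`, so `∀ a b, P a ∨ Q b` splits into `(∀ a, P a) ∨ (∀ b, Q b)`.
Finally `A_{i→f(i)}` for `i = π(x) ∈ H` is `{π(-a) : the rotation by a moves i far from f(i)}`,
so `H = ⋃_{i∈H} A_{i→f(i)}` says exactly `∀ a, P a`, and likewise for `R`.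
-/

theorem List.formPerm_map_finRange_apply {α : Type*} [DecidableEq α] {n : ℕ} [NeZero n]
    {e : Fin n → α} (he : Function.Injective e) (i : Fin n) :
    ((List.finRange n).map e).formPerm (e i) = e (i + 1) := by
  have hnd : ((List.finRange n).map e).Nodup := (List.nodup_finRange n).map he
  have := List.formPerm_apply_getElem _ hnd i (by simp)
  simp only [List.getElem_map, List.getElem_finRange, List.length_map,
    List.length_finRange] at this
  convert this using 2
  · rfl
  · ext
    simp [Fin.val_add]

theorem range_eq_biUnion_iff {G α : Type*} [AddGroup G] {u : G → α} (hu : Function.Injective u)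
    {A : α → Set α} {P : G → G → Prop} (hA : ∀ x y, y ∈ A (u x) ↔ ∃ c, P c x ∧ u (-c) = y) :
    Set.range u = ⋃ i ∈ Set.range u, A i ↔ ∀ c, ∃ x, P c x := by
  simp only [Set.biUnion_range, Set.Subset.antisymm_iff, Set.range_subset_iff, Set.mem_iUnion, hA,
    Set.iUnion_subset_iff]
  constructor
  · rintro ⟨hcover, -⟩ c
    obtain ⟨x, c', hc', hc'c⟩ := hcover (-c)
    rw [neg_injective (hu hc'c)] at hc'
    exact ⟨x, hc'⟩
  · intro hP
    refine ⟨fun d => ?_, fun x y hy => ?_⟩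
    · obtain ⟨x, hx⟩ := hP (-d)
      exact ⟨x, -d, hx, by rw [neg_neg]⟩
    · obtain ⟨c, -, rfl⟩ := (hA x y).1 hy
      exact ⟨-c, rfl⟩

def absDiff {n : ℕ} (u v : Fin n) : ℕ := ((u.val : ℤ) - (v.val : ℤ)).natAbs

theorem absDiff_comm {n : ℕ} (u v : Fin n) : absDiff u v = absDiff v u := by
  rw [absDiff, absDiff, ← Int.natAbs_neg, neg_sub]

theorem lt_linfDist_iff {n r : ℕ} {f g : Perm (Fin n)} :
    r < linfDist f g ↔ ∃ i, r < absDiff (g i) (f i) := by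
  simp only [linfDist, Finset.lt_sup_iff, Finset.mem_univ, true_and]
  exact exists_congr fun i => by rw [absDiff_comm]; rfl

section BlockRotation

variable {p q : ℕ} [NeZero p] [NeZero q]

def blockRotation (a : Fin p) (b : Fin q) : Perm (Fin (p + q)) :=
  finSumFinEquiv.permCongr (sumCongr (Equiv.addLeft a) (Equiv.addLeft b))

@[simp]
theorem blockRotation_castAdd (a : Fin p) (b : Fin q) (x : Fin p) :
    blockRotation a b (Fin.castAdd q x) = Fin.castAdd q (a + x) := by
  simp [blockRotation]

@[simp]
theorem blockRotation_natAdd (a : Fin p) (b : Fin q) (y : Fin q) :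
    blockRotation a b (Fin.natAdd p y) = Fin.natAdd p (b + y) := by
  simp [blockRotation]

theorem blockRotation_mul (a a' : Fin p) (b b' : Fin q) :
    blockRotation a b * blockRotation a' b' = blockRotation (a + a') (b + b') := by
  refine Equiv.ext fun i => ?_
  induction i using Fin.addCases <;> simp [add_assoc]

theorem blockRotation_zero : blockRotation (0 : Fin p) (0 : Fin q) = 1 := by
  refine Equiv.ext fun i => ?_
  induction i using Fin.addCases <;> simp

theorem blockRotation_inv (a : Fin p) (b : Fin q) :
    (blockRotation a b)⁻¹ = blockRotation (-a) (-b) :=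
  inv_eq_of_mul_eq_one_right <| by
    rw [blockRotation_mul, add_neg_cancel, add_neg_cancel, blockRotation_zero]

theorem blockRotation_pow (a : Fin p) (b : Fin q) (n : ℕ) :
    blockRotation a b ^ n = blockRotation (n • a) (n • b) := by
  induction n with
  | zero => simp [blockRotation_zero]
  | succ n ih => rw [pow_succ, ih, blockRotation_mul, succ_nsmul, succ_nsmul]

theorem formPerm_castLE_eq_blockRotation :
    ((List.finRange p).map (Fin.castLE (Nat.le_add_right p q))).formPerm
      = blockRotation (1 : Fin p) (0 : Fin q) := by
  refine Equiv.ext fun i => ?_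
  induction i using Fin.addCases with
  | left x =>
    rw [blockRotation_castAdd, add_comm 1 x]
    exact List.formPerm_map_finRange_apply (Fin.castLE_injective _) x
  | right y =>
    rw [List.formPerm_apply_of_notMem, blockRotation_natAdd, zero_add]
    simp only [List.mem_map, List.mem_finRange, Fin.ext_iff, Fin.val_castLE, Fin.val_natAdd,
      true_and, not_exists]
    omega

theorem formPerm_natAdd_eq_blockRotation :
    ((List.finRange q).map (Fin.natAdd p)).formPerm = blockRotation (0 : Fin p) (1 : Fin q) := by
  refine Equiv.ext fun i => ?_
  induction i using Fin.addCases with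
  | left x =>
    rw [List.formPerm_apply_of_notMem, blockRotation_castAdd, zero_add]
    simp only [List.mem_map, List.mem_finRange, Fin.ext_iff, Fin.val_natAdd, Fin.val_castAdd,
      true_and, not_exists]
    omega
  | right y =>
    rw [List.formPerm_map_finRange_apply (Fin.natAdd_injective _ _), blockRotation_natAdd,
      add_comm y 1]

open Fin.NatCast in
theorem mem_Gpq_iff {g : Perm (Fin (p + q))} :
    g ∈ Gpq p q ↔ ∃ (a : Fin p) (b : Fin q), blockRotation a b = g := by
  constructor
  · intro hg
    induction hg using Subgroup.closure_induction with
    | mem g hg =>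
      rcases hg with rfl | rfl
      · exact ⟨1, 0, formPerm_castLE_eq_blockRotation.symm⟩
      · exact ⟨0, 1, formPerm_natAdd_eq_blockRotation.symm⟩
    | one => exact ⟨0, 0, blockRotation_zero⟩
    | mul _ _ _ _ ih ih' =>
      obtain ⟨a, b, rfl⟩ := ih
      obtain ⟨a', b', rfl⟩ := ih'
      exact ⟨a + a', b + b', (blockRotation_mul a a' b b').symm⟩
    | inv _ _ ih =>
      obtain ⟨a, b, rfl⟩ := ih
      exact ⟨-a, -b, (blockRotation_inv a b).symm⟩
  · rintro ⟨a, b, rfl⟩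
    have hab : blockRotation a b = blockRotation 1 0 ^ a.val * blockRotation 0 1 ^ b.val := by
      simp [blockRotation_pow, blockRotation_mul, nsmul_one, Fin.cast_val_eq_self]
    rw [hab]
    refine mul_mem (pow_mem (Subgroup.subset_closure ?_) _)
      (pow_mem (Subgroup.subset_closure ?_) _)
    · exact Or.inl formPerm_castLE_eq_blockRotation.symm
    · exact Or.inr formPerm_natAdd_eq_blockRotation.symm

end BlockRotation

section Relabeling

variable {p q : ℕ} (π : Perm (Fin (p + q)))

theorem image_lt_eq_range [NeZero q] :
    π '' {x : Fin (p + q) | (x : ℕ) < p} = Set.range (π ∘ Fin.castAdd q) := by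
  rw [Set.range_comp, Fin.range_castAdd]
  rfl

theorem image_ge_eq_range :
    π '' {x : Fin (p + q) | p ≤ (x : ℕ)} = Set.range (π ∘ Fin.natAdd p) := by
  rw [Set.range_comp, Fin.range_natAdd]

variable [NeZero p] [NeZero q]

@[simp]
theorem conj_blockRotation_apply (a : Fin p) (b : Fin q) (z : Fin (p + q)) :
    (π * blockRotation a b * π⁻¹) (π z) = π (blockRotation a b z) := by
  simp [Perm.mul_apply]

theorem conj_blockRotation_inv_apply (a : Fin p) (b : Fin q) (z : Fin (p + q)) :
    (π * blockRotation a b * π⁻¹)⁻¹ (π z) = π (blockRotation (-a) (-b) z) := by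
  simp [mul_inv_rev, blockRotation_inv, Perm.mul_apply]

theorem mem_conjCode_Gpq_iff {g : Perm (Fin (p + q))} :
    g ∈ conjCode π (Gpq p q : Set (Perm (Fin (p + q)))) ↔
      ∃ (a : Fin p) (b : Fin q), π * blockRotation a b * π⁻¹ = g := by
  simp only [conjCode, Set.mem_image, SetLike.mem_coe, mem_Gpq_iff]
  constructor
  · rintro ⟨_, ⟨a, b, rfl⟩, rfl⟩
    exact ⟨a, b, rfl⟩
  · rintro ⟨a, b, rfl⟩
    exact ⟨_, ⟨a, b, rfl⟩, rfl⟩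

theorem forall_mem_conjCode_Gpq_iff {P : Perm (Fin (p + q)) → Prop} :
    (∀ g ∈ conjCode π (Gpq p q : Set (Perm (Fin (p + q)))), P g) ↔
      ∀ (a : Fin p) (b : Fin q), P (π * blockRotation a b * π⁻¹) := by
  simp only [mem_conjCode_Gpq_iff, forall_exists_index]
  exact ⟨fun h a b => h _ a b rfl, fun h _ a b hg => hg ▸ h a b⟩

theorem lt_linfDist_conj_blockRotation_iff (f : Perm (Fin (p + q))) (r : ℕ) (a : Fin p)
    (b : Fin q) :
    r < linfDist f (π * blockRotation a b * π⁻¹) ↔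
      (∃ x, r < absDiff (π (Fin.castAdd q (a + x))) (f (π (Fin.castAdd q x)))) ∨
        ∃ y, r < absDiff (π (Fin.natAdd p (b + y))) (f (π (Fin.natAdd p y))) := by
  rw [lt_linfDist_iff, ← (finSumFinEquiv.trans π).exists_congr_right, Sum.exists]
  simp

theorem mem_AsetRel_castAdd (hq : 0 < q) (r : ℕ) (x : Fin p) (j y : Fin (p + q)) :
    y ∈ AsetRel p q hq π r (π (Fin.castAdd q x)) j ↔
      ∃ a, r < absDiff (π (Fin.castAdd q (a + x))) j ∧ π (Fin.castAdd q (-a)) = y := by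
  rw [AsetRel, if_pos ⟨Fin.castAdd q x, x.isLt, rfl⟩]
  have hinv (a : Fin p) (b : Fin q) (h : 0 < p + q) :
      (π * blockRotation a b * π⁻¹)⁻¹ (π ⟨0, h⟩) = π (Fin.castAdd q (-a)) := by
    rw [show (⟨0, h⟩ : Fin (p + q)) = Fin.castAdd q 0 from Fin.ext (by simp),
      conj_blockRotation_inv_apply, blockRotation_castAdd, add_zero]
  simp only [Set.mem_ofPred_eq, mem_conjCode_Gpq_iff]
  constructor
  · rintro ⟨_, ⟨a, b, rfl⟩, hr, rfl⟩
    exact ⟨a, by simpa [absDiff] using hr, (hinv a b _).symm⟩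
  · rintro ⟨a, hr, rfl⟩
    exact ⟨_, ⟨a, 0, rfl⟩, by simpa [absDiff] using hr, (hinv a 0 _).symm⟩

theorem mem_AsetRel_natAdd (hq : 0 < q) (r : ℕ) (y : Fin q) (j z : Fin (p + q)) :
    z ∈ AsetRel p q hq π r (π (Fin.natAdd p y)) j ↔
      ∃ b, r < absDiff (π (Fin.natAdd p (b + y))) j ∧ π (Fin.natAdd p (-b)) = z := by
  have hy : π (Fin.natAdd p y) ∉ π '' {x : Fin (p + q) | (x : ℕ) < p} := by simp
  rw [AsetRel, if_neg hy]
  have hinv (a : Fin p) (b : Fin q) (h : p < p + q) :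
      (π * blockRotation a b * π⁻¹)⁻¹ (π ⟨p, h⟩) = π (Fin.natAdd p (-b)) := by
    rw [show (⟨p, h⟩ : Fin (p + q)) = Fin.natAdd p 0 from Fin.ext (by simp),
      conj_blockRotation_inv_apply, blockRotation_natAdd, add_zero]
  simp only [Set.mem_ofPred_eq, mem_conjCode_Gpq_iff]
  constructor
  · rintro ⟨_, ⟨a, b, rfl⟩, hr, rfl⟩
    exact ⟨b, by simpa [absDiff] using hr, (hinv a b _).symm⟩
  · rintro ⟨b, hr, rfl⟩
    exact ⟨_, ⟨0, b, rfl⟩, by simpa [absDiff] using hr, (hinv 0 b _).symm⟩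

end Relabeling

/-- `f` is `r`-exposed by `C^π = π G_{p,q} π⁻¹` (i.e. `d(f,g) > r` for every
`g ∈ C^π`) iff `H = ⋃_{i∈H} A^{C^π}_{i→f(i)}` or `R = ⋃_{i∈R} A^{C^π}_{i→f(i)}`,
where `H = {π(1),…,π(p)}` and `R = {π(p+1),…,π(p+q)}` (0-indexed here). -/
theorem stmt_15 (p q : ℕ) (hq : 1 ≤ q) (hpq : q ≤ p) (π : Perm (Fin (p + q))) (r : ℕ)
    (f : Perm (Fin (p + q))) :
    (∀ g ∈ conjCode π (Gpq p q : Set (Perm (Fin (p + q)))), r < linfDist f g) ↔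
      (π '' {x : Fin (p + q) | (x : ℕ) < p} =
        ⋃ i ∈ π '' {x : Fin (p + q) | (x : ℕ) < p}, AsetRel p q hq π r i (f i)) ∨
      (π '' {x : Fin (p + q) | p ≤ (x : ℕ)} =
        ⋃ i ∈ π '' {x : Fin (p + q) | p ≤ (x : ℕ)}, AsetRel p q hq π r i (f i)) := by
  have : NeZero q := ⟨by omega⟩
  have : NeZero p := ⟨by omega⟩
  rw [image_lt_eq_range, image_ge_eq_range,
    range_eq_biUnion_iff (π.injective.comp (Fin.castAdd_injective p q))
      (P := fun a x => r < absDiff (π (Fin.castAdd q (a + x))) (f (π (Fin.castAdd q x))))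
      (fun x _ => mem_AsetRel_castAdd π hq r x _ _),
    range_eq_biUnion_iff (π.injective.comp (Fin.natAdd_injective _ _))
      (P := fun b y => r < absDiff (π (Fin.natAdd p (b + y))) (f (π (Fin.natAdd p y))))
      (fun y _ => mem_AsetRel_natAdd π hq r y _ _)]
  simp only [forall_mem_conjCode_Gpq_iff, lt_linfDist_conj_blockRotation_iff, forall_or_left,
    forall_or_right]
end

section
/- Let p ≥ q ≥ 1 be integers and let r be an integer with (p+q)/2 − 1 < r < p+q. Then for every π ∈ S_{p+q} and all i,j ∈ [p+q]: if 1 ≤ j ≤ p+q−r−1 then |A^{C^π}_{i→j}| ≤ p+q−r−j; if r+2 ≤ j ≤ p+q then |A^{C^π}_{i→j}| ≤ j−r−1; and in all other cases A^{C^π}_{i→j} is empty. -/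
open Equiv

/-!
The conjugate `π G_{p,q} π⁻¹` is abelian, and inside each of its two orbits it acts transitively,
so an element fixing one point of an orbit fixes that orbit pointwise. Since `π(1)` (resp.
`π(p+1)`) lies in the orbit of `i`, the point `g⁻¹(π(1))` (resp. `g⁻¹(π(p+1))`) is determined by
`g(i)`. Hence `|A_{i→j}|` is at most the number of `v` with `|v - j| > r`, which is
`(p+q-j-r-1)₊ + (j-r)₊` with `0`-indexed `j`; the hypothesis `p + q < 2r + 2` kills one summand.
-/

theorem Equiv.Perm.apply_apply_eq_of_commute {α : Type*} {h₁ h₂ m : Perm α} {x : α}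
    (hm₁ : Commute m h₁) (hm₂ : Commute m h₂) (h : h₁ x = h₂ x) : h₁ (m x) = h₂ (m x) := by
  rw [← Perm.mul_apply, ← hm₁.eq, Perm.mul_apply, h, ← Perm.mul_apply, hm₂.eq, Perm.mul_apply]

theorem Subgroup.commute_of_mem_closure_pair {G : Type*} [Group G] {a b x y : G}
    (hab : Commute a b) (hx : x ∈ closure {a, b}) (hy : y ∈ closure {a, b}) : Commute x y := by
  have hgen : ∀ u ∈ ({a, b} : Set G), ∀ v ∈ ({a, b} : Set G), u * v = v * u := by
    rintro _ (rfl | rfl) _ (rfl | rfl)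
    exacts [rfl, hab.eq, hab.symm.eq, rfl]
  exact Set.centralizer_centralizer_comm_of_comm hgen _
    (closure_le_centralizer_centralizer _ hx) _ (closure_le_centralizer_centralizer _ hy)

theorem inv_apply_eq_of_apply_eq_of_mem_conjCode {n : ℕ} {G : Subgroup (Perm (Fin n))}
    (hG : ∀ a ∈ G, ∀ b ∈ G, Commute a b) {π g₁ g₂ : Perm (Fin n)}
    (hg₁ : g₁ ∈ conjCode π G) (hg₂ : g₂ ∈ conjCode π G) {i t : Fin n}
    (ht : ∃ m ∈ G, m (π⁻¹ i) = t) (h : g₁ i = g₂ i) : g₁⁻¹ (π t) = g₂⁻¹ (π t) := by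
  obtain ⟨h₁, hh₁, rfl⟩ := hg₁
  obtain ⟨h₂, hh₂, rfl⟩ := hg₂
  obtain ⟨m, hm, rfl⟩ := ht
  have hx : h₁ (π⁻¹ i) = h₂ (π⁻¹ i) := π.injective (by simpa [Perm.mul_apply] using h)
  -- `h₁⁻¹ (m (π⁻¹ i)) = (h₁⁻¹ * m) (π⁻¹ i)` lies in the orbit of `π⁻¹ i`, where `h₁ = h₂`
  have hk : h₁⁻¹ * m ∈ G := G.mul_mem (G.inv_mem hh₁) hm
  have key := Perm.apply_apply_eq_of_commute (hG _ hk _ hh₁) (hG _ hk _ hh₂) hx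
  rw [Perm.mul_apply, ← Perm.mul_apply h₁, mul_inv_cancel, Perm.one_apply] at key
  simp only [mul_inv_rev, inv_inv, Perm.mul_apply, ← Perm.mul_apply π⁻¹, inv_mul_cancel,
    Perm.one_apply]
  rw [Perm.eq_inv_iff_eq.mpr key.symm]

theorem ncard_setOf_inv_apply_le {α : Type*} [Finite α] {C : Set (Perm α)} {i y : α}
    (hC : ∀ g₁ ∈ C, ∀ g₂ ∈ C, g₁ i = g₂ i → g₁⁻¹ y = g₂⁻¹ y) (P : α → Prop) :
    {x | ∃ g ∈ C, P (g i) ∧ x = g⁻¹ y}.ncard ≤ {v | P v}.ncard := by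
  have : Nonempty α := ⟨i⟩
  have hsub : {x | ∃ g ∈ C, P (g i) ∧ x = g⁻¹ y} ⊆
      (fun v => (Function.invFunOn (fun g : Perm α => g i) C v)⁻¹ y) '' {v | P v} := by
    rintro _ ⟨g, hg, hP, rfl⟩
    have hex : ∃ g' ∈ C, g' i = g i := ⟨g, hg, rfl⟩
    exact ⟨g i, hP, hC _ (Function.invFunOn_mem hex) _ hg (Function.invFunOn_eq hex)⟩
  exact (Set.ncard_le_ncard hsub (Set.toFinite _)).trans (Set.ncard_image_le (Set.toFinite _))

theorem Fin.ncard_setOf_lt_natAbs_sub_le (n r j : ℕ) :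
    {v : Fin n | r < ((v : ℤ) - j).natAbs}.ncard ≤ (n - (j + r + 1)) + (j - r) := by
  have hmaps : ∀ v ∈ {v : Fin n | r < ((v : ℤ) - j).natAbs},
      (v : ℕ) ∈ ((Finset.range (j - r) ∪ Finset.Ico (j + r + 1) n : Finset ℕ) : Set ℕ) := by
    intro v hv
    simp only [Set.mem_ofPred_eq, Finset.coe_union, Finset.coe_range, Finset.coe_Ico,
      Set.mem_union, Set.mem_Iio, Set.mem_Ico, Fin.is_lt, and_true] at hv ⊢
    omega
  calc _ ≤ ((Finset.range (j - r) ∪ Finset.Ico (j + r + 1) n : Finset ℕ) : Set ℕ).ncard :=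
        Set.ncard_le_ncard_of_injOn Fin.val hmaps Fin.val_injective.injOn (Finset.finite_toSet _)
    _ ≤ _ := by
        rw [Set.ncard_coe_finset]
        exact (Finset.card_union_le _ _).trans (by simp [add_comm])

section Gpq

variable {p q : ℕ}

theorem mem_map_castLE_finRange {x : Fin (p + q)} :
    x ∈ (List.finRange p).map (Fin.castLE (Nat.le_add_right p q)) ↔ (x : ℕ) < p := by
  simp only [List.mem_map, List.mem_finRange, true_and]
  exact ⟨fun ⟨a, ha⟩ => ha ▸ a.isLt, fun h => ⟨⟨x, h⟩, rfl⟩⟩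

theorem mem_map_natAdd_finRange {x : Fin (p + q)} :
    x ∈ (List.finRange q).map (Fin.natAdd p) ↔ p ≤ (x : ℕ) := by
  simp only [List.mem_map, List.mem_finRange, true_and]
  refine ⟨fun ⟨a, ha⟩ => ha ▸ by simp, fun h => ⟨⟨x - p, by omega⟩, Fin.ext ?_⟩⟩
  simp only [Fin.natAdd]
  omega

theorem commute_of_mem_Gpq {a b : Perm (Fin (p + q))} (ha : a ∈ Gpq p q) (hb : b ∈ Gpq p q) :
    Commute a b := by
  have hdisj : Perm.Disjoint ((List.finRange p).map (Fin.castLE (Nat.le_add_right p q))).formPerm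
      ((List.finRange q).map (Fin.natAdd p)).formPerm := fun x => by
    by_cases hx : (x : ℕ) < p
    · exact .inr (List.formPerm_apply_of_notMem (by rw [mem_map_natAdd_finRange]; omega))
    · exact .inl (List.formPerm_apply_of_notMem (by rw [mem_map_castLE_finRange]; omega))
  exact Subgroup.commute_of_mem_closure_pair hdisj.commute ha hb

theorem exists_mem_Gpq_apply_eq {x t : Fin (p + q)} (h : (x : ℕ) < p ↔ (t : ℕ) < p) :
    ∃ m ∈ Gpq p q, m x = t := by
  by_cases hx : (x : ℕ) < p
  · obtain ⟨n, hn⟩ := ((List.nodup_finRange p).map (Fin.castLE_injective _)).isCycleOn_formPerm.2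
      (mem_map_castLE_finRange.mpr hx) (mem_map_castLE_finRange.mpr (h.mp hx))
    exact ⟨_, Subgroup.zpow_mem _ (Subgroup.subset_closure (by simp)) n, hn⟩
  · obtain ⟨n, hn⟩ := ((List.nodup_finRange q).map (Fin.natAdd_injective q p)).isCycleOn_formPerm.2
      (mem_map_natAdd_finRange.mpr (not_lt.mp hx))
      (mem_map_natAdd_finRange.mpr (not_lt.mp (mt h.mpr hx)))
    exact ⟨_, Subgroup.zpow_mem _ (Subgroup.subset_closure (by simp)) n, hn⟩

end Gpq

theorem AsetRel_ncard_le (p q : ℕ) (hq : 0 < q) (π : Perm (Fin (p + q))) (r : ℕ)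
    (i j : Fin (p + q)) :
    (AsetRel p q hq π r i j).ncard ≤ (p + q - (j + r + 1)) + (j - r) := by
  have hbound (t : Fin (p + q)) (ht : ((π⁻¹ i : Fin (p + q)) : ℕ) < p ↔ (t : ℕ) < p) :
      {x | ∃ g ∈ conjCode π (Gpq p q : Set (Perm (Fin (p + q)))),
        r < (((g i).val : ℤ) - ((j : ℕ) : ℤ)).natAbs ∧ x = g⁻¹ (π t)}.ncard ≤
        (p + q - (j + r + 1)) + (j - r) :=
    (ncard_setOf_inv_apply_le (fun _ hg₁ _ hg₂ => inv_apply_eq_of_apply_eq_of_mem_conjCode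
      (fun _ ha _ hb => commute_of_mem_Gpq ha hb) hg₁ hg₂ (exists_mem_Gpq_apply_eq ht)) _).trans
      (Fin.ncard_setOf_lt_natAbs_sub_le _ _ _)
  unfold AsetRel
  split_ifs with hi
  · obtain ⟨x, hx, rfl⟩ := hi
    exact hbound _ (iff_of_true (by simpa using hx) (Nat.zero_lt_of_lt hx))
  · exact hbound _ (by simpa using fun h => hi ⟨_, h, by simp⟩)

/-- With `0`-indexed `j`, the paper's cases `j+1 ∈ [p+q-r-1]` and `j+1 ∈ [r+2, p+q]` read
`j + r + 2 ≤ p + q` and `r + 1 ≤ j`. -/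
theorem stmt_16_general (p q : ℕ) (hq : 1 ≤ q) (r : ℕ)
    (hr1 : p + q < 2 * r + 2) (π : Perm (Fin (p + q)))
    (i j : Fin (p + q)) :
    ((j : ℕ) + r + 2 ≤ p + q →
      (AsetRel p q hq π r i j).ncard ≤ p + q - r - ((j : ℕ) + 1)) ∧
    (r + 1 ≤ (j : ℕ) →
      (AsetRel p q hq π r i j).ncard ≤ (j : ℕ) - r) ∧
    (¬((j : ℕ) + r + 2 ≤ p + q) ∧ ¬(r + 1 ≤ (j : ℕ)) →
      AsetRel p q hq π r i j = ∅) := by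
  have hA := AsetRel_ncard_le p q hq π r i j
  refine ⟨fun _ => by omega, fun _ => by omega, fun ⟨_, _⟩ => ?_⟩
  rw [← Set.ncard_eq_zero]
  omega

/-- bounds on `|A^{C^π}_{i→j}|` when `(p+q)/2 − 1 < r < p+q`
(the first inequality is phrased as `p + q < 2r + 2`). With 0-indexed `j`, the paper value
`j+1 ∈ B = [p+q-r-1]` gives `|A| ≤ p+q-r-(j+1)`; `j+1 ∈ T = [r+2, p+q]` gives
`|A| ≤ (j+1)-r-1`; otherwise `A = ∅`. -/
theorem stmt_16 (p q : ℕ) (hq : 1 ≤ q) (hpq : q ≤ p) (r : ℕ)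
    (hr1 : p + q < 2 * r + 2) (hr2 : r < p + q) (π : Perm (Fin (p + q)))
    (i j : Fin (p + q)) :
    ((j : ℕ) + r + 2 ≤ p + q →
      (AsetRel p q hq π r i j).ncard ≤ p + q - r - ((j : ℕ) + 1)) ∧
    (r + 1 ≤ (j : ℕ) →
      (AsetRel p q hq π r i j).ncard ≤ (j : ℕ) - r) ∧
    (¬((j : ℕ) + r + 2 ≤ p + q) ∧ ¬(r + 1 ≤ (j : ℕ)) →
      AsetRel p q hq π r i j = ∅) :=
  stmt_16_general p q hq r hr1 π i j
end

section
/- Let n ≥ 10 be an integer, let r = n − ⌈(√(4n+13) + 1)/2⌉, and set B = [1, n−r−1] and T = [r+2, n]. Suppose f, f' ∈ S_n satisfy f⁻¹(i) = f'⁻¹(i) for all i ∈ B ∪ T. Then either d(f, D_n) = d(f', D_n) > r, or both d(f, D_n) ≤ r and d(f', D_n) ≤ r. -/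
open Equiv

private lemma ldist_inv {n : ℕ} (f g : Perm (Fin n)) :
    linfDist f g =
      Finset.univ.sup fun y : Fin n => (((y : ℕ) : ℤ) - ((g (f⁻¹ y)).val : ℤ)).natAbs := by
  unfold linfDist
  apply le_antisymm
  · refine Finset.sup_le fun i _ => ?_
    have := Finset.le_sup (f := fun y : Fin n =>
      (((y : ℕ) : ℤ) - ((g (f⁻¹ y)).val : ℤ)).natAbs) (Finset.mem_univ (f i))
    simpa using this
  · refine Finset.sup_le fun y _ => ?_
    have := Finset.le_sup (f := fun i : Fin n =>
      (((f i).val : ℤ) - ((g i).val : ℤ)).natAbs) (Finset.mem_univ (f⁻¹ y))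
    simpa using this

private lemma key_lemma {n r : ℕ} (a b g : Perm (Fin n))
    (h : ∀ x : Fin n, ((x : ℕ) + r + 2 ≤ n ∨ r + 1 ≤ (x : ℕ)) → a⁻¹ x = b⁻¹ x) :
    linfDist b g ≤ max (linfDist a g) r := by
  rw [ldist_inv b g]
  refine Finset.sup_le fun y _ => ?_
  by_cases hc : (y : ℕ) + r + 2 ≤ n ∨ r + 1 ≤ (y : ℕ)
  · rw [← h y hc]
    refine le_trans ?_ (le_max_left _ _)
    rw [ldist_inv a g]
    exact Finset.le_sup (f := fun y : Fin n =>
      (((y : ℕ) : ℤ) - ((g (a⁻¹ y)).val : ℤ)).natAbs) (Finset.mem_univ y)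
  · push_neg at hc
    have hz : ((g (b⁻¹ y)) : Fin n).val < n := (g (b⁻¹ y)).isLt
    have hy : (y : ℕ) < n := y.isLt
    refine le_trans ?_ (le_max_right _ _)
    omega

/-- Let `n ≥ 10`, `r = n − ⌈(√(4n+13) + 1)/2⌉`, `B = [1, n−r−1]`,
`T = [r+2, n]` (1-indexed; 0-indexed `x` lies in `B ∪ T` iff `x + r + 2 ≤ n` or
`r + 1 ≤ x`). If `f⁻¹` and `f'⁻¹` agree on `B ∪ T`, then either
`d(f,Dₙ) = d(f',Dₙ) > r`, or both `d(f,Dₙ) ≤ r` and `d(f',Dₙ) ≤ r`. -/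
theorem stmt_19 (n : ℕ) (hn : 10 ≤ n) (r : ℕ)
    (hr : (r : ℤ) = (n : ℤ) - ⌈(Real.sqrt (4 * (n : ℝ) + 13) + 1) / 2⌉)
    (f f' : Perm (Fin n))
    (h : ∀ x : Fin n, ((x : ℕ) + r + 2 ≤ n ∨ r + 1 ≤ (x : ℕ)) → f⁻¹ x = f'⁻¹ x) :
    (distToCode f (Dn n : Set (Perm (Fin n))) = distToCode f' (Dn n : Set (Perm (Fin n))) ∧
        r < distToCode f (Dn n : Set (Perm (Fin n)))) ∨
      (distToCode f (Dn n : Set (Perm (Fin n))) ≤ r ∧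
        distToCode f' (Dn n : Set (Perm (Fin n))) ≤ r) := by
  have hsym : ∀ x : Fin n, ((x : ℕ) + r + 2 ≤ n ∨ r + 1 ≤ (x : ℕ)) → f'⁻¹ x = f⁻¹ x :=
    fun x hx => (h x hx).symm
  have k1 : ∀ g, linfDist f' g ≤ max (linfDist f g) r := fun g => key_lemma f f' g h
  have k2 : ∀ g, linfDist f g ≤ max (linfDist f' g) r := fun g => key_lemma f' f g hsym
  by_cases hex : ∃ g ∈ (Dn n : Set (Perm (Fin n))), linfDist f g ≤ r
  · obtain ⟨g, hg, hgle⟩ := hex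
    right
    refine ⟨le_trans (Nat.sInf_le ⟨g, hg, rfl⟩) hgle, ?_⟩
    have h2 : linfDist f' g ≤ r := le_trans (k1 g) (max_le hgle le_rfl)
    exact le_trans (Nat.sInf_le ⟨g, hg, rfl⟩) h2
  · push_neg at hex
    have hall : ∀ g ∈ (Dn n : Set (Perm (Fin n))), linfDist f g = linfDist f' g := by
      intro g hg
      have h1 := hex g hg
      have h2 : r < linfDist f' g := by
        by_contra hcon
        push_neg at hcon
        have := le_trans (k2 g) (max_le hcon le_rfl)
        omega
      have a1 := k1 g
      have a2 := k2 g
      omega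
    have himg : linfDist f '' (Dn n : Set (Perm (Fin n))) =
        linfDist f' '' (Dn n : Set (Perm (Fin n))) := by
      ext d
      constructor
      · rintro ⟨g, hg, rfl⟩; exact ⟨g, hg, (hall g hg).symm⟩
      · rintro ⟨g, hg, rfl⟩; exact ⟨g, hg, hall g hg⟩
    left
    constructor
    · unfold distToCode
      rw [himg]
    · have hne : (linfDist f '' (Dn n : Set (Perm (Fin n)))).Nonempty :=
        ⟨linfDist f 1, 1, (Dn n).one_mem, rfl⟩
      obtain ⟨g, hg, hge⟩ := Nat.sInf_mem hne
      have := hex g hg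
      unfold distToCode
      omega
end
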